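/- For every perfect matching M of a graph G, the forcing number f(G,M) is at most the anti-forcing number af(G,M). -/

import Mathlib

open SimpleGraph

variable {V : Type*}

/-- A closed walk is an `M`-alternating cycle: it is a cycle and its edges alternate
(cyclically) between `M` and the complement of `M`. -/
def SimpleGraph.IsAltCycle (G : SimpleGraph V) (M : Set (Sym2 V)) {v : V} (c : G.Walk v v) :
    Prop :=
  c.IsCycle ∧ List.Chain' (fun e f => (e ∈ M ↔ f ∉ M)) c.edges ∧
    ∀ e f, c.edges.head? = some e → c.edges.getLast? = some f → (f ∈ M ↔ e ∉ M)

/-- `S` is a forcing set of the perfect matching `M`: `S ⊆ M` and `M` is the unique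
perfect matching of `G` containing `S`. -/
def SimpleGraph.IsForcingSet (G : SimpleGraph V) (M : G.Subgraph) (S : Set (Sym2 V)) : Prop :=
  S ⊆ M.edgeSet ∧ ∀ N : G.Subgraph, N.IsPerfectMatching → S ⊆ N.edgeSet → N = M

/-- `S` is an anti-forcing set of the perfect matching `M`: `S` consists of edges of `G`
not in `M`, and `M` is the unique perfect matching of `G - S` (equivalently, the unique
perfect matching of `G` whose edge set avoids `S`). -/
def SimpleGraph.IsAntiForcingSet (G : SimpleGraph V) (M : G.Subgraph) (S : Set (Sym2 V)) :
    Prop :=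
  S ⊆ G.edgeSet \ M.edgeSet ∧
    ∀ N : G.Subgraph, N.IsPerfectMatching → Disjoint N.edgeSet S → N = M

/-- The forcing number `f(G,M)`. -/
noncomputable def SimpleGraph.forcingNum (G : SimpleGraph V) (M : G.Subgraph) : ℕ :=
  sInf {n | ∃ S : Set (Sym2 V), G.IsForcingSet M S ∧ S.ncard = n}

/-- The anti-forcing number `af(G,M)`. -/
noncomputable def SimpleGraph.antiForcingNum (G : SimpleGraph V) (M : G.Subgraph) : ℕ :=
  sInf {n | ∃ S : Set (Sym2 V), G.IsAntiForcingSet M S ∧ S.ncard = n}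

/-!
Take an anti-forcing set `S` of `M` of minimum size and replace each edge `e ∈ S` by the edge of
`M` covering one of its endpoints. Any perfect matching `N` containing all these `M`-edges cannot
contain an edge `e ∈ S`: `e` would share a vertex with an `N`-edge of `M`, hence be that edge,
whereas `e ∉ M`. So `N` avoids `S` and thus equals `M`, and the new set is a forcing set of size
at most `|S|`.
-/

namespace SimpleGraph

variable {G : SimpleGraph V} {M N : G.Subgraph}

lemma Subgraph.IsMatching.eq_of_mem_of_mem (hM : M.IsMatching) {e f : Sym2 V} {v : V}
    (he : e ∈ M.edgeSet) (hf : f ∈ M.edgeSet) (hve : v ∈ e) (hvf : v ∈ f) : e = f := by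
  obtain ⟨w, rfl⟩ := Sym2.mem_iff_exists.mp hve
  obtain ⟨w', rfl⟩ := Sym2.mem_iff_exists.mp hvf
  rw [hM.eq_of_adj_left (Subgraph.mem_edgeSet.mp he) (Subgraph.mem_edgeSet.mp hf)]

lemma Subgraph.IsPerfectMatching.exists_mem_edgeSet (hM : M.IsPerfectMatching) (v : V) :
    ∃ e ∈ M.edgeSet, v ∈ e := by
  obtain ⟨w, hvw, -⟩ := hM.1 (hM.2 v)
  exact ⟨s(v, w), hvw, Sym2.mem_mk_left v w⟩

lemma Subgraph.IsPerfectMatching.eq_of_edgeSet_subset (hN : N.IsPerfectMatching)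
    (hM : M.IsMatching) (h : N.edgeSet ⊆ M.edgeSet) : N = M := by
  refine IsMatching.injOn_edgeSet hN.1 hM (h.antisymm fun e he => ?_)
  obtain ⟨f, hfN, hvf⟩ := hN.exists_mem_edgeSet e.out.1
  rwa [← hM.eq_of_mem_of_mem (h hfN) he hvf (Sym2.out_fst_mem e)]

lemma isAntiForcingSet_edgeSet_diff (hM : M.IsMatching) :
    G.IsAntiForcingSet M (G.edgeSet \ M.edgeSet) :=
  ⟨subset_rfl, fun N hN hdisj => hN.eq_of_edgeSet_subset hM fun _ he =>
    Classical.byContradiction fun heM =>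
      Set.disjoint_left.mp hdisj he ⟨N.edgeSet_subset he, heM⟩⟩

lemma IsAntiForcingSet.isForcingSet_image {S : Set (Sym2 V)} (hS : G.IsAntiForcingSet M S)
    {f : Sym2 V → Sym2 V} (hfM : ∀ e ∈ S, f e ∈ M.edgeSet)
    (hf : ∀ e ∈ S, ∃ v ∈ e, v ∈ f e) :
    G.IsForcingSet M (f '' S) := by
  refine ⟨Set.image_subset_iff.mpr hfM, fun N hN hfN => hS.2 N hN ?_⟩
  refine Set.disjoint_left.mpr fun e heN heS => (hS.1 heS).2 ?_
  obtain ⟨v, hve, hvf⟩ := hf e heS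
  rw [hN.1.eq_of_mem_of_mem heN (hfN ⟨e, heS, rfl⟩) hve hvf]
  exact hfM e heS

lemma forcingNum_le_ncard {S : Set (Sym2 V)} (hS : G.IsForcingSet M S) :
    G.forcingNum M ≤ S.ncard :=
  Nat.sInf_le ⟨S, hS, rfl⟩

lemma exists_isAntiForcingSet_ncard_eq (hM : M.IsMatching) :
    ∃ S, G.IsAntiForcingSet M S ∧ S.ncard = G.antiForcingNum M :=
  Nat.sInf_mem (s := {n | ∃ S : Set (Sym2 V), G.IsAntiForcingSet M S ∧ S.ncard = n})
    ⟨_, _, isAntiForcingSet_edgeSet_diff hM, rfl⟩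

end SimpleGraph

/-- For every perfect matching `M` of `G`, the forcing number is at most the
anti-forcing number. -/
theorem forcing_le_antiforcing (G : SimpleGraph V) [Fintype V]
    (M : G.Subgraph) (hM : M.IsPerfectMatching) :
    G.forcingNum M ≤ G.antiForcingNum M := by
  obtain ⟨S, hS, hcard⟩ := exists_isAntiForcingSet_ncard_eq hM.1
  choose m hmM hvm using hM.exists_mem_edgeSet
  have hforcing : G.IsForcingSet M ((fun e => m e.out.1) '' S) :=
    hS.isForcingSet_image (fun _ _ => hmM _) fun e _ => ⟨_, Sym2.out_fst_mem e, hvm _⟩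
  calc G.forcingNum M ≤ ((fun e => m e.out.1) '' S).ncard := forcingNum_le_ncard hforcing
    _ ≤ S.ncard := Set.ncard_image_le S.toFinite
    _ = G.antiForcingNum M := hcard
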